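/- Let g be a uniformly Lipschitz generator. Then the following two conditions are equivalent. (a) There exists a constant C > 0 such that for all t ∈ [0,T], all y, y′ ∈ ℝⁿ and all z, z′ ∈ ℝ^{n×d}: −4⟨y⁻, g(t, y⁺ + y′, z) + g(t, −y′, −z′)⟩ ≤ 2·∑_{k=1}^{n} 1_{y_k<0}·|z_k − z′_k|² + C·|y⁻|². (b) For every k ∈ {1,…,n}, every t ∈ [0,T], every y′ ∈ ℝⁿ, every δ ∈ ℝⁿ with δ ≥ 0 and δ_k = 0, and all z, z′ ∈ ℝ^{n×d} with z_k = z′_k, one has g_k(t, δ + y′, z) ≥ −g_k(t, −y′, −z′). (This is the deterministic core of the theorem characterizing when the ask price dominates the bid price for the multidimensional g-pricing mechanism: the ask price E_g[ξ|F_s] dominates the bid price −E_g[−ξ|F_s] for all positions ξ if and only if (b) holds.) -/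

import Mathlib

/-! For (a) ⇒ (b), test (a) at `y = δ - e • eₖ`: then `y⁺ = δ`, `y⁻ = e • eₖ`, and the indicator
sum only sees row `k`, where `z` and `z'` agree; so `-4e (gₖ(δ+y',z) + gₖ(-y',-z')) ≤ C e²`,
and `e → 0⁺` gives (b).

For (b) ⇒ (a), compare coordinatewise. Where `yᵢ < 0`, apply (b) with `δ = y⁺` (so `δᵢ = 0`) to
the matrix `z` with its `i`-th row replaced by that of `z'`; the Lipschitz bound pays
`L |zᵢ - z'ᵢ|` for the replacement, and AM-GM bounds the resulting `4L yᵢ⁻ |zᵢ - z'ᵢ|` by the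
`i`-th term of the right-hand side of (a) with `C = 2L² + 1`. -/

open scoped RealInnerProductSpace

noncomputable section

/-- `ℝⁿ` with the Euclidean norm. -/
abbrev Vec (n : ℕ) := EuclideanSpace ℝ (Fin n)

/-- Real `n × d` matrices with the Frobenius norm. -/
abbrev Mat (n d : ℕ) := EuclideanSpace ℝ (Fin n × Fin d)

/-- The `k`-th row of a matrix. -/
def row {n d : ℕ} (z : Mat n d) (k : Fin n) : Vec d := WithLp.toLp 2 (fun j => z (k, j))

/-- Componentwise positive part. -/
def pos {n : ℕ} (x : Vec n) : Vec n := WithLp.toLp 2 (fun i => max (x i) 0)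

/-- Componentwise negative part. -/
def neg {n : ℕ} (x : Vec n) : Vec n := WithLp.toLp 2 (fun i => max (-(x i)) 0)

/-- A generator is uniformly Lipschitz on `[0,T]`. -/
def UniformlyLipschitz {n d : ℕ} (T : ℝ)
    (g : ℝ → Vec n → Mat n d → Vec n) : Prop :=
  ∃ L : ℝ, 0 ≤ L ∧ ∀ t ∈ Set.Icc (0:ℝ) T, ∀ y y' : Vec n, ∀ z z' : Mat n d,
    ‖g t y z - g t y' z'‖ ≤ L * (‖y - y'‖ + ‖z - z'‖)

section TestVector

variable {n : ℕ} {k : Fin n} {δ : Vec n} {e : ℝ}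

lemma pos_sub_single (hδ : ∀ i, 0 ≤ δ i) (hδk : δ k = 0) (he : 0 ≤ e) :
    pos (δ - EuclideanSpace.single k e) = δ := by
  ext i
  by_cases hik : i = k
  · subst hik; simp [pos, hδk, he]
  · simp [pos, hik, hδ i]

lemma neg_sub_single (hδ : ∀ i, 0 ≤ δ i) (hδk : δ k = 0) (he : 0 ≤ e) :
    neg (δ - EuclideanSpace.single k e) = EuclideanSpace.single k e := by
  ext i
  by_cases hik : i = k
  · subst hik; simp [neg, hδk, he]
  · simp [neg, hik, hδ i]

lemma eq_of_sub_single_apply_neg (hδ : ∀ i, 0 ≤ δ i) {i : Fin n}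
    (hi : (δ - EuclideanSpace.single k e) i < 0) : i = k := by
  by_contra hik
  simp [hik] at hi
  exact (hδ i).not_gt hi

end TestVector

section ReplaceRow

variable {n d : ℕ}

def replaceRow (z z' : Mat n d) (k : Fin n) : Mat n d :=
  WithLp.toLp 2 (fun p => if p.1 = k then z' p else z p)

lemma row_replaceRow_self (z z' : Mat n d) (k : Fin n) :
    row (replaceRow z z' k) k = row z' k := by
  ext j
  simp [row, replaceRow]

lemma norm_sub_replaceRow (z z' : Mat n d) (k : Fin n) :
    ‖z - replaceRow z z' k‖ = ‖row z k - row z' k‖ := by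
  rw [← sq_eq_sq₀ (norm_nonneg _) (norm_nonneg _), EuclideanSpace.real_norm_sq_eq,
    EuclideanSpace.real_norm_sq_eq, Fintype.sum_prod_type, Finset.sum_eq_single k]
  · simp [row, replaceRow]
  · intro i _ hik
    simp [replaceRow, hik]
  · simp

end ReplaceRow

lemma neg_apply_le_of_quadratic_bound {n d : ℕ} {F : Vec n → Vec n} {w : Vec n}
    {z z' : Mat n d} {C : ℝ}
    (h : ∀ y : Vec n, -4 * ⟪neg y, F (pos y) + w⟫ ≤
      2 * ∑ k : Fin n, (if y k < 0 then (1:ℝ) else 0) * ‖row z k - row z' k‖ ^ 2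
        + C * ‖neg y‖ ^ 2)
    {k : Fin n} {δ : Vec n} (hδ : ∀ i, 0 ≤ δ i) (hδk : δ k = 0) (hz : row z k = row z' k) :
    -(w k) ≤ F δ k := by
  have hbound : ∀ e > 0, -(C * e / 4) ≤ F δ k + w k := by
    intro e he
    have hsum : ∑ i : Fin n, (if (δ - EuclideanSpace.single k e) i < 0 then (1:ℝ) else 0)
        * ‖row z i - row z' i‖ ^ 2 = 0 := by
      refine Finset.sum_eq_zero fun i _ => ?_
      split_ifs with hi
      · rw [eq_of_sub_single_apply_neg hδ hi, hz, sub_self, norm_zero]; ring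
      · ring
    have := h (δ - EuclideanSpace.single k e)
    rw [pos_sub_single hδ hδk he.le, neg_sub_single hδ hδk he.le, hsum,
      EuclideanSpace.inner_single_left, PiLp.norm_single] at this
    simp only [conj_trivial, PiLp.add_apply, Real.norm_eq_abs, sq_abs] at this
    rw [neg_le_iff_add_nonneg, ← mul_le_mul_iff_of_pos_left he]
    nlinarith
  have hlim : Filter.Tendsto (fun e : ℝ => -(C * e / 4)) (nhdsWithin 0 (Set.Ioi 0)) (nhds 0) := by
    have : Continuous fun e : ℝ => -(C * e / 4) := by fun_prop
    simpa using (this.tendsto 0).mono_left nhdsWithin_le_nhds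
  have := le_of_tendsto hlim (eventually_nhdsWithin_of_forall hbound)
  linarith

-- `-4as ≤ 4Lar ≤ 2r² + 2L²a²`
lemma neg_four_mul_le_of_neg_mul_le {a r s L : ℝ} (ha : 0 ≤ a) (hs : -(L * r) ≤ s) :
    -4 * (a * s) ≤ 2 * r ^ 2 + (2 * L ^ 2 + 1) * a ^ 2 := by
  nlinarith [sq_nonneg (r - L * a), sq_nonneg a]

lemma quadratic_bound_of_rowwise_comparison {n d : ℕ} {G : Vec n → Mat n d → Vec n} {L : ℝ}
    (hG : ∀ y z z', ‖G y z - G y z'‖ ≤ L * ‖z - z'‖)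
    (hcomp : ∀ k : Fin n, ∀ y' δ : Vec n, (∀ i, 0 ≤ δ i) → δ k = 0 →
      ∀ z z' : Mat n d, row z k = row z' k → -(G (-y') (-z') k) ≤ G (δ + y') z k)
    (y y' : Vec n) (z z' : Mat n d) :
    -4 * ⟪neg y, G (pos y + y') z + G (-y') (-z')⟫ ≤
      2 * ∑ k : Fin n, (if y k < 0 then (1:ℝ) else 0) * ‖row z k - row z' k‖ ^ 2
        + (2 * L ^ 2 + 1) * ‖neg y‖ ^ 2 := by
  have hinner : ∀ x w : Vec n, ⟪x, w⟫ = ∑ i, x i * w i := fun x w => by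
    simp [PiLp.inner_apply, mul_comm]
  rw [hinner, EuclideanSpace.real_norm_sq_eq (neg y), Finset.mul_sum, Finset.mul_sum,
    Finset.mul_sum, ← Finset.sum_add_distrib]
  refine Finset.sum_le_sum fun i _ => ?_
  by_cases hyi : y i < 0
  · have hpos : pos y i = 0 := by simp [pos, hyi.le]
    have hcompi := hcomp i y' (pos y) (fun j => le_max_right _ _) hpos
      (replaceRow z z' i) z' (row_replaceRow_self z z' i)
    have hLip : |G (pos y + y') z i - G (pos y + y') (replaceRow z z' i) i|
        ≤ L * ‖row z i - row z' i‖ :=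
      (PiLp.norm_apply_le _ i).trans ((hG _ _ _).trans_eq (by rw [norm_sub_replaceRow]))
    rw [if_pos hyi, one_mul]
    refine neg_four_mul_le_of_neg_mul_le (show 0 ≤ neg y i from le_max_right _ _) ?_
    simp only [PiLp.add_apply]
    linarith [(abs_le.mp hLip).1]
  · have hneg : neg y i = 0 := by simp [neg, not_lt.mp hyi]
    simp [hneg, hyi]

theorem ask_bid_domination_criterion_general
    {n d : ℕ} (T : ℝ)
    (g : ℝ → Vec n → Mat n d → Vec n) (hg : UniformlyLipschitz T g) :
    (∃ C : ℝ, 0 < C ∧ ∀ t ∈ Set.Icc (0:ℝ) T, ∀ y y' : Vec n, ∀ z z' : Mat n d,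
        -4 * ⟪neg y, g t (pos y + y') z + g t (-y') (-z')⟫ ≤
          2 * ∑ k : Fin n, (if y k < 0 then (1:ℝ) else 0) * ‖row z k - row z' k‖ ^ 2
            + C * ‖neg y‖ ^ 2)
    ↔
    (∀ k : Fin n, ∀ t ∈ Set.Icc (0:ℝ) T, ∀ y' δ : Vec n,
        (∀ i, 0 ≤ δ i) → δ k = 0 →
        ∀ z z' : Mat n d, row z k = row z' k →
          -(g t (-y') (-z') k) ≤ g t (δ + y') z k) := by
  constructor
  · rintro ⟨C, -, hC⟩ k t ht y' δ hδ hδk z z' hz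
    exact neg_apply_le_of_quadratic_bound (F := fun δ => g t (δ + y') z)
      (fun y => hC t ht y y' z z') hδ hδk hz
  · intro hcomp
    obtain ⟨L, -, hL⟩ := hg
    refine ⟨2 * L ^ 2 + 1, by positivity, fun t ht => ?_⟩
    refine quadratic_bound_of_rowwise_comparison (fun y z z' => ?_)
      (fun k => hcomp k t ht)
    have := hL t ht y y z z'
    rwa [sub_self, norm_zero, zero_add] at this

/-- the deterministic core of the theorem characterizing when the ask price
dominates the bid price for the multidimensional `g`-pricing mechanism. -/
theorem ask_bid_domination_criterion
    {n d : ℕ} (hn : 0 < n) (hd : 0 < d) (T : ℝ) (hT : 0 < T)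
    (g : ℝ → Vec n → Mat n d → Vec n) (hg : UniformlyLipschitz T g) :
    (∃ C : ℝ, 0 < C ∧ ∀ t ∈ Set.Icc (0:ℝ) T, ∀ y y' : Vec n, ∀ z z' : Mat n d,
        -4 * ⟪neg y, g t (pos y + y') z + g t (-y') (-z')⟫ ≤
          2 * ∑ k : Fin n, (if y k < 0 then (1:ℝ) else 0) * ‖row z k - row z' k‖ ^ 2
            + C * ‖neg y‖ ^ 2)
    ↔
    (∀ k : Fin n, ∀ t ∈ Set.Icc (0:ℝ) T, ∀ y' δ : Vec n,
        (∀ i, 0 ≤ δ i) → δ k = 0 →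
        ∀ z z' : Mat n d, row z k = row z' k →
          -(g t (-y') (-z') k) ≤ g t (δ + y') z k) :=
  ask_bid_domination_criterion_general T g hg
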